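/- Let w ∈ ℝᴺ with wᵢ > 0 and ∑ᵢ wᵢ = 1, and let T ≥ 1. Define the tempered weights w̃ᵢ = wᵢ^(1/T) / ∑ⱼ wⱼ^(1/T). Then w̃ is a probability vector, and the Shannon entropy satisfies H(w̃) ≥ H(w), with equality when T = 1. -/

import Mathlib

/-!
Write `q = w ^ β / Z` with `β = 1 / T ∈ (0, 1]`, so that `log q = β log w - log Z`.
Expanding both relative entropies gives the identity
`(1 - β) (H(q) - H(w)) = D(w ‖ q) + β D(q ‖ w)`,
whose right-hand side is nonnegative by Gibbs' inequality; for `β = 1` tempering is the identity.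
-/

open Finset Real InformationTheory

section Entropy

variable {ι : Type*} [Fintype ι]

noncomputable def entropy (p : ι → ℝ) : ℝ := -∑ i, p i * log (p i)

noncomputable def relEntropy (p q : ι → ℝ) : ℝ := ∑ i, p i * log (p i / q i)

lemma mul_klFun_div {x y : ℝ} (hy : 0 < y) :
    y * klFun (x / y) = x * log (x / y) + y - x := by
  rw [klFun_apply]
  field_simp

theorem relEntropy_nonneg {p q : ι → ℝ} (hp : ∀ i, 0 ≤ p i) (hq : ∀ i, 0 < q i)
    (hsum : ∑ i, q i ≤ ∑ i, p i) : 0 ≤ relEntropy p q := by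
  have hkl : 0 ≤ ∑ i, q i * klFun (p i / q i) :=
    sum_nonneg fun i _ => mul_nonneg (hq i).le (klFun_nonneg (div_nonneg (hp i) (hq i).le))
  simp only [mul_klFun_div (hq _), sum_sub_distrib, sum_add_distrib] at hkl
  unfold relEntropy
  linarith

lemma nonempty_of_sum_eq_one {p : ι → ℝ} (hsum : ∑ i, p i = 1) : Nonempty ι :=
  univ_nonempty_iff.mp (nonempty_of_sum_ne_zero (hsum ▸ one_ne_zero))

noncomputable def temper (β : ℝ) (w : ι → ℝ) : ι → ℝ := fun i => w i ^ β / ∑ j, w j ^ β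

variable {w : ι → ℝ} (hw : ∀ i, 0 < w i) (β : ℝ)
include hw

lemma sum_rpow_pos [Nonempty ι] : 0 < ∑ j, w j ^ β :=
  sum_pos (fun j _ => rpow_pos_of_pos (hw j) β) univ_nonempty

lemma temper_pos (i : ι) : 0 < temper β w i :=
  have : Nonempty ι := ⟨i⟩
  div_pos (rpow_pos_of_pos (hw i) β) (sum_rpow_pos hw β)

lemma sum_temper [Nonempty ι] : ∑ i, temper β w i = 1 := by
  unfold temper
  rw [← sum_div, div_self (sum_rpow_pos hw β).ne']

lemma log_temper (i : ι) :
    log (temper β w i) = β * log (w i) - log (∑ j, w j ^ β) := by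
  have : Nonempty ι := ⟨i⟩
  rw [temper, log_div (rpow_pos_of_pos (hw i) β).ne' (sum_rpow_pos hw β).ne', log_rpow (hw i)]

omit hw in
lemma temper_one_of_sum_eq_one (hw_sum : ∑ i, w i = 1) : temper 1 w = w := by
  ext i
  simp [temper, hw_sum]

theorem one_sub_mul_entropy_temper_sub_entropy (hw_sum : ∑ i, w i = 1) :
    (1 - β) * (entropy (temper β w) - entropy w) =
      relEntropy w (temper β w) + β * relEntropy (temper β w) w := by
  have := nonempty_of_sum_eq_one hw_sum
  set Z := ∑ j, w j ^ β
  set q := temper β w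
  -- Pointwise the two sides differ by `log Z * (w i - q i)`, which sums to zero.
  have hpoint : ∀ i, w i * log (w i / q i) + β * (q i * log (q i / w i)) =
      (1 - β) * (w i * log (w i) - q i * log (q i)) + log Z * (w i - q i) := fun i => by
    rw [log_div (hw i).ne' (temper_pos hw β i).ne', log_div (temper_pos hw β i).ne' (hw i).ne',
      log_temper hw β i]
    ring
  calc (1 - β) * (entropy q - entropy w)
      = ∑ i, ((1 - β) * (w i * log (w i) - q i * log (q i)) + log Z * (w i - q i)) := by
        rw [sum_add_distrib, ← mul_sum, ← mul_sum, sum_sub_distrib, sum_sub_distrib, hw_sum,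
          sum_temper hw β, entropy, entropy]
        ring
    _ = ∑ i, (w i * log (w i / q i) + β * (q i * log (q i / w i))) := by simp only [hpoint]
    _ = relEntropy w q + β * relEntropy q w := by rw [sum_add_distrib, ← mul_sum]; rfl

theorem entropy_le_entropy_temper (hw_sum : ∑ i, w i = 1) (hβ₀ : 0 ≤ β) (hβ₁ : β ≤ 1) :
    entropy w ≤ entropy (temper β w) := by
  have := nonempty_of_sum_eq_one hw_sum
  rcases hβ₁.lt_or_eq with hβ₁ | rfl
  · have hsum : ∑ i, temper β w i = ∑ i, w i := by rw [sum_temper hw β, hw_sum]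
    have hD : 0 ≤ relEntropy w (temper β w) + β * relEntropy (temper β w) w :=
      add_nonneg (relEntropy_nonneg (fun i => (hw i).le) (temper_pos hw β) hsum.le)
        (mul_nonneg hβ₀ (relEntropy_nonneg (fun i => (temper_pos hw β i).le) hw hsum.ge))
    rw [← one_sub_mul_entropy_temper_sub_entropy hw β hw_sum,
      mul_nonneg_iff_of_pos_left (sub_pos.mpr hβ₁)] at hD
    linarith
  · rw [temper_one_of_sum_eq_one hw_sum]

end Entropy

theorem tempering_increases_entropy_general {N : ℕ} (w : Fin N → ℝ)
    (hw_pos : ∀ i, 0 < w i) (hw_sum : ∑ i, w i = 1) (T : ℝ) (hT : 1 ≤ T) :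
    (let wt : Fin N → ℝ := fun i => w i ^ (1 / T) / ∑ j, w j ^ (1 / T)
    (∀ i, 0 ≤ wt i) ∧ (∑ i, wt i = 1) ∧
      (-∑ i, w i * Real.log (w i)) ≤ (-∑ i, wt i * Real.log (wt i)) ∧
      (T = 1 → (-∑ i, wt i * Real.log (wt i)) = (-∑ i, w i * Real.log (w i)))) := by
  have := nonempty_of_sum_eq_one hw_sum
  have hβ₀ : 0 ≤ 1 / T := by positivity
  have hβ₁ : 1 / T ≤ 1 := (div_le_one (by linarith)).mpr hT
  refine ⟨fun i => (temper_pos hw_pos _ i).le, sum_temper hw_pos _,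
    entropy_le_entropy_temper hw_pos _ hw_sum hβ₀ hβ₁, ?_⟩
  rintro rfl
  change entropy (temper (1 / 1) w) = entropy w
  rw [div_one, temper_one_of_sum_eq_one hw_sum]

/-- Tempering weights with temperature T ≥ 1 never decreases the Shannon
entropy, with equality when T = 1. -/
theorem tempering_increases_entropy {N : ℕ} (hN : 1 ≤ N) (w : Fin N → ℝ)
    (hw_pos : ∀ i, 0 < w i) (hw_sum : ∑ i, w i = 1) (T : ℝ) (hT : 1 ≤ T) :
    (let wt : Fin N → ℝ := fun i => w i ^ (1 / T) / ∑ j, w j ^ (1 / T)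
    (∀ i, 0 ≤ wt i) ∧ (∑ i, wt i = 1) ∧
      (-∑ i, w i * Real.log (w i)) ≤ (-∑ i, wt i * Real.log (wt i)) ∧
      (T = 1 → (-∑ i, wt i * Real.log (wt i)) = (-∑ i, w i * Real.log (w i)))) :=
  tempering_increases_entropy_general w hw_pos hw_sum T hT
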